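/- arXiv:2503.16995 — 2 statements merged into one kernel-verified Lean document; each statement's English description precedes it below -/
import Mathlib

section
/- There exist constants 0 < c_5 ≤ c_6, depending only on a and β, such that for every integer j ≥ 1 and every rectangle R ∈ 𝒦_j, letting c_R denote the center of R and T_R(x) := j^{(β−1)a} x + c_R (i.e. T_R(x)_i = j^{a_i(β−1)} x_i + (c_R)_i), one has T_R(c_5 [−1,1]^d) ⊆ R ⊆ T_R(c_6 [−1,1]^d). -/
open MeasureTheory

noncomputable section

/-- Number of outer intervals on each side at level `j`: `⌈j^{a-1}⌉`. -/
def mOut (a : ℝ) (j : ℕ) : ℤ := ⌈(j : ℝ) ^ (a - 1)⌉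

/-- Number of inner intervals at level `j`: `⌈j^{a}⌉`. -/
def mIn (a : ℝ) (j : ℕ) : ℤ := ⌈(j : ℝ) ^ a⌉

/-- Total number of intervals in the partition `𝒜_j^i`. -/
def numIv (a : ℝ) (j : ℕ) : ℤ := mIn a j + 2 * mOut a j

/-- Common length of the outer intervals. -/
def lenO (a β : ℝ) (j : ℕ) : ℝ :=
  (((j : ℝ) + 1) ^ (a * β) - (j : ℝ) ^ (a * β)) / ((mOut a j : ℤ) : ℝ)

/-- Common length of the inner intervals. -/
def lenI (a β : ℝ) (j : ℕ) : ℝ :=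
  2 * (j : ℝ) ^ (a * β) / ((mIn a j : ℤ) : ℝ)

/-- The `k`-th knot (from the left, `k = 0, …, numIv`) of the partition `𝒜_j^i` of
`A_j^i = [−(j+1)^{aβ}, (j+1)^{aβ})`: the two components of `A_j^i ∖ B_j^i` are divided
into `⌈j^{a-1}⌉` equal intervals each, and `B_j^i = [−j^{aβ}, j^{aβ})` into `⌈j^{a}⌉`
equal intervals. -/
def knot (a β : ℝ) (j : ℕ) (k : ℤ) : ℝ :=
  if k ≤ mOut a j then -((j : ℝ) + 1) ^ (a * β) + (k : ℝ) * lenO a β j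
  else if k ≤ mOut a j + mIn a j then
    -(j : ℝ) ^ (a * β) + ((k - mOut a j : ℤ) : ℝ) * lenI a β j
  else (j : ℝ) ^ (a * β) + ((k - mOut a j - mIn a j : ℤ) : ℝ) * lenO a β j

/-- The `k`-th interval of the partition `𝒜_j^i`. -/
def ivl (a β : ℝ) (j : ℕ) (k : ℤ) : Set ℝ :=
  Set.Ico (knot a β j k) (knot a β j (k + 1))

/-- The partition `𝒜_j^i` (with `a = a_i`), as a family of subsets of `ℝ`. -/
def partA (a β : ℝ) (j : ℕ) : Set (Set ℝ) :=
  {I | ∃ k : ℤ, 0 ≤ k ∧ k < numIv a j ∧ I = ivl a β j k}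

/-- The index `k` corresponds to an inner interval. -/
def isInnerIdx (a : ℝ) (j : ℕ) (k : ℤ) : Prop :=
  mOut a j ≤ k ∧ k < mOut a j + mIn a j

/-- The family `ℬ_j^i` of inner intervals. -/
def partInner (a β : ℝ) (j : ℕ) : Set (Set ℝ) :=
  {I | ∃ k : ℤ, isInnerIdx a j k ∧ I = ivl a β j k}

/-- `𝒜_j`: rectangles `I_1 × ⋯ × I_d` with `I_i ∈ 𝒜_j^i`, encoded by their factors. -/
def rectA {d : ℕ} (a : Fin d → ℝ) (β : ℝ) (j : ℕ) : Set (Fin d → Set ℝ) :=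
  {R | ∀ i, R i ∈ partA (a i) β j}

/-- `ℬ_j`: rectangles all of whose factors are inner intervals. -/
def rectB {d : ℕ} (a : Fin d → ℝ) (β : ℝ) (j : ℕ) : Set (Fin d → Set ℝ) :=
  {R | ∀ i, R i ∈ partInner (a i) β j}

/-- `𝒦_j := 𝒜_j ∖ ℬ_j` for `j ≥ 1`. -/
def rectK {d : ℕ} (a : Fin d → ℝ) (β : ℝ) (j : ℕ) : Set (Fin d → Set ℝ) :=
  rectA a β j \ rectB a β j

/-- `𝒦_0 := {[−1,1)^d}`. -/
def rectK0 (d : ℕ) : Set (Fin d → Set ℝ) := {fun _ => Set.Ico (-1 : ℝ) 1}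

/-- `𝒦 := ⋃_{j ≥ 0} 𝒦_j`. -/
def rectKall {d : ℕ} (a : Fin d → ℝ) (β : ℝ) : Set (Fin d → Set ℝ) :=
  rectK0 d ∪ ⋃ (j : ℕ) (_ : 1 ≤ j), rectK a β j

/-- The volume `|R|` of a rectangle, the product of its side lengths. -/
def rVol {d : ℕ} (R : Fin d → Set ℝ) : ℝ := ∏ i, (volume (R i)).toReal

/-- The center of a rectangle (coordinatewise midpoint). -/
def ctr {d : ℕ} (R : Fin d → Set ℝ) (i : Fin d) : ℝ := (sInf (R i) + sSup (R i)) / 2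

/-- The affine transform `T_R(x) := j^{(β−1)a} x + c_R`, i.e.
`T_R(x)_i = j^{a_i(β−1)} x_i + (c_R)_i`. -/
def affT {d : ℕ} (a : Fin d → ℝ) (β : ℝ) (j : ℕ) (R : Fin d → Set ℝ)
    (x : Fin d → ℝ) : Fin d → ℝ :=
  fun i => (j : ℝ) ^ (a i * (β - 1)) * x i + ctr R i

/-!
Each factor of `R ∈ 𝒦_j` is an interval of `𝒜_j^i`, of length either
`((j+1)^{aβ} - j^{aβ}) / ⌈j^{a-1}⌉` or `2 j^{aβ} / ⌈j^a⌉` (with `a = a_i`). By the mean value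
theorem the numerator of the first is `aβ ξ^{aβ-1}` with `j < ξ < j+1 ≤ 2j`, and
`y ≤ ⌈y⌉ ≤ 2y` for `y ≥ 1`, so both lengths lie between `s/2` and `sideBound a β * s`, where
`s = j^{a(β-1)}` is the scale of `T_R` in that coordinate. An interval of length between `s/2` and
`2cs` contains its midpoint `± s/8` and is contained in its midpoint `± cs`.
-/

open Set

lemma Real.exists_rpow_sub_rpow_eq {p x y : ℝ} (hp : 1 ≤ p) (hxy : x < y) :
    ∃ ξ ∈ Ioo x y, y ^ p - x ^ p = p * ξ ^ (p - 1) * (y - x) := by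
  obtain ⟨ξ, hξ, hslope⟩ :=
    exists_hasDerivAt_eq_slope (fun t : ℝ => t ^ p) (fun t => p * t ^ (p - 1)) hxy
      (Real.continuous_rpow_const (by linarith)).continuousOn
      (fun t _ => Real.hasDerivAt_rpow_const (Or.inr hp))
  refine ⟨ξ, hξ, ?_⟩
  rw [hslope, div_mul_cancel₀ _ (sub_ne_zero.2 hxy.ne')]

lemma Real.rpow_sub_one_le_add_one_rpow_sub_rpow {p x : ℝ} (hp : 1 ≤ p) (hx : 0 ≤ x) :
    x ^ (p - 1) ≤ (x + 1) ^ p - x ^ p := by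
  obtain ⟨ξ, hξ, hmvt⟩ := Real.exists_rpow_sub_rpow_eq hp (lt_add_one x)
  have hmono : x ^ (p - 1) ≤ ξ ^ (p - 1) := Real.rpow_le_rpow hx hξ.1.le (by linarith)
  have hξp : 0 ≤ ξ ^ (p - 1) := Real.rpow_nonneg (hx.trans hξ.1.le) _
  rw [hmvt, add_sub_cancel_left, mul_one]
  nlinarith

lemma Real.add_one_rpow_sub_rpow_le {p x : ℝ} (hp : 1 ≤ p) (hx : 1 ≤ x) :
    (x + 1) ^ p - x ^ p ≤ p * 2 ^ (p - 1) * x ^ (p - 1) := by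
  obtain ⟨ξ, hξ, hmvt⟩ := Real.exists_rpow_sub_rpow_eq hp (lt_add_one x)
  have hmono : ξ ^ (p - 1) ≤ (2 * x) ^ (p - 1) :=
    Real.rpow_le_rpow (by linarith [hξ.1]) (by linarith [hξ.2]) (by linarith)
  rw [hmvt, add_sub_cancel_left, mul_one, mul_assoc, ← Real.mul_rpow zero_le_two (by linarith)]
  gcongr

lemma ceil_mem_Icc_of_one_le {y : ℝ} (hy : 1 ≤ y) : (⌈y⌉ : ℝ) ∈ Icc y (2 * y) :=
  ⟨Int.le_ceil y, Int.ceil_le_two_mul (by linarith)⟩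

lemma Real.rpow_mul_sub_eq_mul {x : ℝ} (hx : 0 < x) (a β b : ℝ) :
    x ^ (a * β - b) = x ^ (a * (β - 1)) * x ^ (a - b) := by
  rw [← Real.rpow_add hx]
  ring_nf

section Lengths

variable {a β : ℝ} {j : ℕ}

lemma one_le_natCast_rpow (hj : 1 ≤ j) {x : ℝ} (hx : 0 ≤ x) : 1 ≤ (j : ℝ) ^ x :=
  Real.one_le_rpow (by exact_mod_cast hj) hx

lemma natCast_rpow_mul_eq_mul (hj : 1 ≤ j) (a β : ℝ) :
    (j : ℝ) ^ (a * β) = (j : ℝ) ^ (a * (β - 1)) * (j : ℝ) ^ a := by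
  simpa using Real.rpow_mul_sub_eq_mul (x := j) (by exact_mod_cast hj) a β 0

lemma mIn_mem_Icc (ha : 0 ≤ a) (hj : 1 ≤ j) :
    (mIn a j : ℝ) ∈ Icc ((j : ℝ) ^ a) (2 * (j : ℝ) ^ a) :=
  ceil_mem_Icc_of_one_le (one_le_natCast_rpow hj ha)

lemma mOut_mem_Icc (ha : 1 ≤ a) (hj : 1 ≤ j) :
    (mOut a j : ℝ) ∈ Icc ((j : ℝ) ^ (a - 1)) (2 * (j : ℝ) ^ (a - 1)) :=
  ceil_mem_Icc_of_one_le (one_le_natCast_rpow hj (sub_nonneg.2 ha))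

lemma rpow_le_lenI (ha : 0 ≤ a) (hj : 1 ≤ j) : (j : ℝ) ^ (a * (β - 1)) ≤ lenI a β j := by
  have hja := one_le_natCast_rpow hj ha
  have hm := mIn_mem_Icc ha hj
  calc (j : ℝ) ^ (a * (β - 1)) = 2 * (j : ℝ) ^ (a * β) / (2 * (j : ℝ) ^ a) := by
        rw [eq_div_iff (by positivity), natCast_rpow_mul_eq_mul hj a β]
        ring
    _ ≤ lenI a β j := div_le_div_of_nonneg_left (by positivity) (by linarith [hm.1]) hm.2

lemma lenI_le (ha : 0 ≤ a) (hj : 1 ≤ j) : lenI a β j ≤ 2 * (j : ℝ) ^ (a * (β - 1)) := by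
  have hja := one_le_natCast_rpow hj ha
  calc lenI a β j ≤ 2 * (j : ℝ) ^ (a * β) / (j : ℝ) ^ a :=
        div_le_div_of_nonneg_left (by positivity) (by linarith) (mIn_mem_Icc ha hj).1
    _ = 2 * (j : ℝ) ^ (a * (β - 1)) := by
        rw [div_eq_iff (by positivity), natCast_rpow_mul_eq_mul hj a β]
        ring

lemma half_rpow_le_lenO (ha : 1 ≤ a) (hβ : 1 ≤ β) (hj : 1 ≤ j) :
    (j : ℝ) ^ (a * (β - 1)) / 2 ≤ lenO a β j := by
  have hja := one_le_natCast_rpow hj (sub_nonneg.2 ha)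
  have hm := mOut_mem_Icc ha hj
  have hnum := Real.rpow_sub_one_le_add_one_rpow_sub_rpow (by nlinarith : 1 ≤ a * β)
    (Nat.cast_nonneg j)
  calc (j : ℝ) ^ (a * (β - 1)) / 2 = (j : ℝ) ^ (a * β - 1) / (2 * (j : ℝ) ^ (a - 1)) := by
        rw [Real.rpow_mul_sub_eq_mul (x := j) (by exact_mod_cast hj),
          div_eq_div_iff (by positivity) (by positivity)]
        ring
    _ ≤ lenO a β j := div_le_div₀ ((Real.rpow_nonneg (Nat.cast_nonneg j) _).trans hnum) hnum
        (by linarith [hm.1]) hm.2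

lemma lenO_le (ha : 1 ≤ a) (hβ : 1 ≤ β) (hj : 1 ≤ j) :
    lenO a β j ≤ a * β * 2 ^ (a * β - 1) * (j : ℝ) ^ (a * (β - 1)) := by
  have hja := one_le_natCast_rpow hj (sub_nonneg.2 ha)
  calc lenO a β j ≤ a * β * 2 ^ (a * β - 1) * (j : ℝ) ^ (a * β - 1) / (j : ℝ) ^ (a - 1) :=
        div_le_div₀ (by positivity)
          (Real.add_one_rpow_sub_rpow_le (by nlinarith) (by exact_mod_cast hj))
          (by linarith) (mOut_mem_Icc ha hj).1
    _ = a * β * 2 ^ (a * β - 1) * (j : ℝ) ^ (a * (β - 1)) := by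
        rw [div_eq_iff (by positivity), Real.rpow_mul_sub_eq_mul (x := j) (by exact_mod_cast hj)]
        ring

lemma mOut_pos (hj : 0 < j) : 0 < mOut a j :=
  Int.ceil_pos.2 (Real.rpow_pos_of_pos (by exact_mod_cast hj) _)

lemma mIn_pos (hj : 0 < j) : 0 < mIn a j :=
  Int.ceil_pos.2 (Real.rpow_pos_of_pos (by exact_mod_cast hj) _)

lemma mOut_mul_lenO (hj : 0 < j) :
    (mOut a j : ℝ) * lenO a β j = ((j : ℝ) + 1) ^ (a * β) - (j : ℝ) ^ (a * β) :=
  mul_div_cancel₀ _ (by exact_mod_cast (mOut_pos hj).ne')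

lemma mIn_mul_lenI (hj : 0 < j) : (mIn a j : ℝ) * lenI a β j = 2 * (j : ℝ) ^ (a * β) :=
  mul_div_cancel₀ _ (by exact_mod_cast (mIn_pos hj).ne')

lemma knot_succ_sub (hj : 0 < j) (k : ℤ) :
    knot a β j (k + 1) - knot a β j k = lenO a β j ∨
      knot a β j (k + 1) - knot a β j k = lenI a β j := by
  have hmIn := mIn_pos (a := a) hj
  have hO := mOut_mul_lenO (a := a) (β := β) hj
  have hI := mIn_mul_lenI (a := a) (β := β) hj
  unfold knot
  -- inside each of the three blocks the knots are in arithmetic progression; at the two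
  -- junctions `hO` and `hI` say that the previous block ends exactly where the next begins
  split_ifs <;> push_cast
  all_goals first
    | omega
    | (left; linear_combination)
    | (right; linear_combination)
    | (obtain rfl : k = mOut a j := by omega
       right; linear_combination -hO)
    | (obtain rfl : k = mOut a j + mIn a j := by omega
       left; push_cast; linear_combination -hI)

end Lengths

def sideBound (a β : ℝ) : ℝ := 2 + a * β * 2 ^ (a * β - 1)

lemma sideBound_nonneg {a β : ℝ} (ha : 0 ≤ a) (hβ : 0 ≤ β) : 0 ≤ sideBound a β := by
  unfold sideBound
  positivity

lemma knot_succ_sub_mem_Icc {a β : ℝ} {j : ℕ} (ha : 1 ≤ a) (hβ : 1 ≤ β) (hj : 1 ≤ j) (k : ℤ) :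
    knot a β j (k + 1) - knot a β j k ∈
      Icc ((j : ℝ) ^ (a * (β - 1)) / 2) (sideBound a β * (j : ℝ) ^ (a * (β - 1))) := by
  have hs : 0 ≤ (j : ℝ) ^ (a * (β - 1)) := Real.rpow_nonneg (Nat.cast_nonneg j) _
  have hab : 0 ≤ a * β * 2 ^ (a * β - 1) := by positivity
  rcases knot_succ_sub (a := a) (β := β) hj k with h | h <;> rw [h, sideBound]
  · exact ⟨half_rpow_le_lenO ha hβ hj, (lenO_le ha hβ hj).trans (by nlinarith)⟩
  · have ha₀ : 0 ≤ a := by linarith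
    exact ⟨by linarith [rpow_le_lenI (β := β) ha₀ hj], (lenI_le ha₀ hj).trans (by nlinarith)⟩

section Boxes

variable {d : ℕ} {a : Fin d → ℝ} {β : ℝ} {j : ℕ} {R : Fin d → Set ℝ} {lo hi : Fin d → ℝ}

lemma ctr_eq_of_eq_Ico {i : Fin d} (hR : R i = Ico (lo i) (hi i)) (hlt : lo i < hi i) :
    ctr R i = (lo i + hi i) / 2 := by
  rw [ctr, hR, csInf_Ico hlt, csSup_Ico hlt]

lemma affT_image_subset (hj : 0 < j) (hR : ∀ i, R i = Ico (lo i) (hi i))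
    (hlen : ∀ i, (j : ℝ) ^ (a i * (β - 1)) / 2 ≤ hi i - lo i) :
    affT a β j R '' {x | ∀ i, |x i| ≤ 1 / 8} ⊆ {x | ∀ i, x i ∈ R i} := by
  rintro _ ⟨x, hx, rfl⟩ i
  have hs : 0 < (j : ℝ) ^ (a i * (β - 1)) := Real.rpow_pos_of_pos (by exact_mod_cast hj) _
  have hlen := hlen i
  have hsx : |(j : ℝ) ^ (a i * (β - 1)) * x i| ≤ (j : ℝ) ^ (a i * (β - 1)) / 8 := by
    rw [abs_mul, abs_of_pos hs]
    nlinarith [hx i]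
  rw [affT, ctr_eq_of_eq_Ico (hR i) (by linarith), hR i]
  constructor <;> linarith [abs_le.1 hsx]

lemma subset_affT_image {c : ℝ} (hj : 0 < j) (hR : ∀ i, R i = Ico (lo i) (hi i))
    (hlt : ∀ i, lo i < hi i) (hlen : ∀ i, hi i - lo i ≤ 2 * c * (j : ℝ) ^ (a i * (β - 1))) :
    {x | ∀ i, x i ∈ R i} ⊆ affT a β j R '' {x | ∀ i, |x i| ≤ c} := by
  intro y hy
  have hs : ∀ i, 0 < (j : ℝ) ^ (a i * (β - 1)) :=
    fun i => Real.rpow_pos_of_pos (by exact_mod_cast hj) _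
  refine ⟨fun i => (y i - ctr R i) / (j : ℝ) ^ (a i * (β - 1)), fun i => ?_, ?_⟩
  · have hyi : y i ∈ Ico (lo i) (hi i) := hR i ▸ hy i
    rw [abs_div, abs_of_pos (hs i), div_le_iff₀ (hs i), ctr_eq_of_eq_Ico (hR i) (hlt i), abs_le]
    constructor <;> linarith [hyi.1, hyi.2, hlen i]
  · funext i
    rw [affT, mul_div_cancel₀ _ (hs i).ne', sub_add_cancel]

end Boxes

theorem stmt7_general (d : ℕ) (a : Fin d → ℝ) (ha : ∀ i, 1 ≤ a i)
    (β : ℝ) (hβ : 1 ≤ β) :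
    ∃ c₅ c₆ : ℝ, 0 < c₅ ∧ c₅ ≤ c₆ ∧ ∀ j : ℕ, 1 ≤ j → ∀ R ∈ rectK a β j,
      affT a β j R '' {x | ∀ i, |x i| ≤ c₅} ⊆ {x | ∀ i, x i ∈ R i} ∧
        {x | ∀ i, x i ∈ R i} ⊆ affT a β j R '' {x | ∀ i, |x i| ≤ c₆} := by
  have hbound : ∀ i, 0 ≤ sideBound (a i) β :=
    fun i => sideBound_nonneg (by linarith [ha i]) (by linarith)
  have hsum : 0 ≤ ∑ i, sideBound (a i) β := Finset.sum_nonneg fun i _ => hbound i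
  refine ⟨1 / 8, 1 + ∑ i, sideBound (a i) β, by norm_num, by linarith, fun j hj R hR => ?_⟩
  choose k _ _ hk using hR.1
  have hIco : ∀ i, R i = Ico (knot (a i) β j (k i)) (knot (a i) β j (k i + 1)) := hk
  have hlen := fun i => knot_succ_sub_mem_Icc (ha i) hβ hj (k i)
  have hs : ∀ i, 0 < (j : ℝ) ^ (a i * (β - 1)) :=
    fun i => Real.rpow_pos_of_pos (by exact_mod_cast hj) _
  refine ⟨affT_image_subset hj hIco fun i => (hlen i).1,
    subset_affT_image hj hIco (fun i => by linarith [(hlen i).1, hs i]) fun i => ?_⟩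
  have hle : sideBound (a i) β ≤ 2 * (1 + ∑ i, sideBound (a i) β) := by
    linarith [Finset.single_le_sum (fun i _ => hbound i) (Finset.mem_univ i)]
  exact (hlen i).2.trans (mul_le_mul_of_nonneg_right hle (hs i).le)

/-- Lemma 3.1(c): there are `0 < c₅ ≤ c₆` depending only on `a, β` with
`T_R(c₅[−1,1]^d) ⊆ R ⊆ T_R(c₆[−1,1]^d)` for all `j ≥ 1` and `R ∈ 𝒦_j`. -/
theorem stmt7 (d : ℕ) (hd : 1 ≤ d) (a : Fin d → ℝ) (ha : ∀ i, 1 ≤ a i)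
    (β : ℝ) (hβ : 1 ≤ β) :
    ∃ c₅ c₆ : ℝ, 0 < c₅ ∧ c₅ ≤ c₆ ∧ ∀ j : ℕ, 1 ≤ j → ∀ R ∈ rectK a β j,
      affT a β j R '' {x | ∀ i, |x i| ≤ c₅} ⊆ {x | ∀ i, x i ∈ R i} ∧
        {x | ∀ i, x i ∈ R i} ⊆ affT a β j R '' {x | ∀ i, |x i| ≤ c₆} :=
  stmt7_general d a ha β hβ
end
end

section
/- Let s ∈ ℝ, 0 < p < ∞ and 0 < q < ∞, and let β ≥ 1. There exist constants 0 < c ≤ C, depending only on a, d, β, s, p, q, such that for every family of complex numbers (s_{R,n})_{R∈𝒦, n∈ℕ₀^d}: c·A ≤ ( ∑_{R∈𝒦} ‖ ∑_{n∈ℕ₀^d} |R|^{s/ν + 1/2} |s_{R,n}| 𝟙_{U(R,n)} ‖_{L_p(ℝ^d)}^q )^{1/q} ≤ C·A, where A := ( ∑_{R∈𝒦} |R|^{(s/ν + 1/2 − 1/p)q} ( ∑_{n∈ℕ₀^d} |s_{R,n}|^p )^{q/p} )^{1/q} (both sides being simultaneously finite or infinite). -/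
open MeasureTheory

noncomputable section

open scoped ENNReal

/-- The Euclidean norm on `ℝ^d`. -/
def euclNorm {d : ℕ} (x : Fin d → ℝ) : ℝ := Real.sqrt (∑ i, (x i) ^ 2)

/-- The anisotropic dilation `t^{-a} x`. -/
def aDilNeg {d : ℕ} (a : Fin d → ℝ) (t : ℝ) (x : Fin d → ℝ) : Fin d → ℝ :=
  fun i => t ^ (-(a i)) * x i

/-- `nrm` is the anisotropic quasi-norm `|·|_a`. -/
def IsAnisoNorm {d : ℕ} (a : Fin d → ℝ) (nrm : (Fin d → ℝ) → ℝ) : Prop :=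
  nrm 0 = 0 ∧ ∀ x : Fin d → ℝ, x ≠ 0 → 0 < nrm x ∧ euclNorm (aDilNeg a (nrm x) x) = 1

/-- `U(R,n) = { y : |δ_R y − π(n + (1/2,…,1/2))|_a < 1 }` with
`δ_R = diag(|I_1|,…,|I_d|)`. -/
def Uset {d : ℕ} (nrm : (Fin d → ℝ) → ℝ) (R : Fin d → Set ℝ) (n : Fin d → ℕ) :
    Set (Fin d → ℝ) :=
  {y | nrm (fun i => (volume (R i)).toReal * y i - Real.pi * ((n i : ℝ) + 1 / 2)) < 1}

/-- The sequence-space quantity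
`( ∑_{R∈𝒦} ‖ ∑_n |R|^{s/ν+1/2} |s_{R,n}| 𝟙_{U(R,n)} ‖_{L_p}^q )^{1/q}` (in `ℝ≥0∞`). -/
def mixedLpQty {d : ℕ} (nrm : (Fin d → ℝ) → ℝ) (a : Fin d → ℝ) (β s p q : ℝ)
    (coef : (Fin d → Set ℝ) → (Fin d → ℕ) → ℂ) : ℝ≥0∞ :=
  (∑' R : rectKall a β,
      ((∫⁻ x : Fin d → ℝ,
          (∑' n : Fin d → ℕ,
            ENNReal.ofReal (rVol (R : Fin d → Set ℝ) ^ (s / (∑ i, a i) + 1 / 2) *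
                ‖coef (R : Fin d → Set ℝ) n‖) *
              (Uset nrm (R : Fin d → Set ℝ) n).indicator (fun _ => (1 : ℝ≥0∞)) x) ^ p)
        ^ (1 / p)) ^ q) ^ (1 / q)

/-- The discrete quantity
`A = ( ∑_{R∈𝒦} |R|^{(s/ν+1/2−1/p)q} ( ∑_n |s_{R,n}|^p )^{q/p} )^{1/q}` (in `ℝ≥0∞`). -/
def discreteQty {d : ℕ} (a : Fin d → ℝ) (β s p q : ℝ)
    (coef : (Fin d → Set ℝ) → (Fin d → ℕ) → ℂ) : ℝ≥0∞ :=
  (∑' R : rectKall a β,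
      ENNReal.ofReal (rVol (R : Fin d → Set ℝ) ^ ((s / (∑ i, a i) + 1 / 2 - 1 / p) * q)) *
        (∑' n : Fin d → ℕ,
          ENNReal.ofReal (‖coef (R : Fin d → Set ℝ) n‖ ^ p)) ^ (q / p))
    ^ (1 / q)

/-!
Since `|x|_a < 1 ↔ |x| < 1` (the map `t ↦ |t^{-a} x|` is strictly decreasing), each `U(R, n)`
is the preimage of the Euclidean unit ball under `y ↦ δ_R y − π (n + 1/2)`. These sets are
pairwise disjoint, because two distinct centres `π (n + 1/2)`, `π (m + 1/2)` are at least
`π > 2` apart in some coordinate. So the `p`-th power of the inner sum is the sum of the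
`p`-th powers, and each `U(R, n)` has volume `V / |R|`, `V` the volume of the unit ball. Hence
the `L_p` norm attached to `R` equals `V^{1/p} |R|^{s/ν+1/2-1/p} (∑_n |s_{R,n}|^p)^{1/p}`, and
the two quantities agree up to the factor `V^{1/p}`: one may take `c = C = V^{1/p}`.
-/

section AnisotropicNorm

variable {d : ℕ} {a : Fin d → ℝ}

lemma strictAntiOn_euclNorm_aDilNeg (ha : ∀ i, 0 < a i) {x : Fin d → ℝ} (hx : x ≠ 0) :
    StrictAntiOn (fun t => euclNorm (aDilNeg a t x)) (Set.Ioi 0) := by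
  intro u hu v _ huv
  obtain ⟨i₀, hi₀⟩ := Function.ne_iff.mp hx
  have hpos : ∀ i, 0 < v ^ (-a i) := fun i => Real.rpow_pos_of_pos (hu.out.trans huv) _
  have hdil : ∀ i, v ^ (-a i) < u ^ (-a i) := fun i =>
    Real.rpow_lt_rpow_of_neg hu huv (neg_neg_of_pos (ha i))
  apply Real.sqrt_lt_sqrt (Finset.sum_nonneg fun i _ => sq_nonneg _)
  refine Finset.sum_lt_sum (fun i _ => ?_) ⟨i₀, Finset.mem_univ _, ?_⟩
  · simp only [aDilNeg, mul_pow]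
    exact mul_le_mul_of_nonneg_right (pow_le_pow_left₀ (hpos i).le (hdil i).le 2) (sq_nonneg _)
  · simp only [aDilNeg, mul_pow]
    exact mul_lt_mul_of_pos_right (pow_lt_pow_left₀ (hdil i₀) (hpos i₀).le two_ne_zero)
      (sq_pos_of_ne_zero hi₀)

lemma IsAnisoNorm.lt_one_iff {nrm : (Fin d → ℝ) → ℝ} (hnrm : IsAnisoNorm a nrm)
    (ha : ∀ i, 0 < a i) (x : Fin d → ℝ) : nrm x < 1 ↔ ∑ i, x i ^ 2 < 1 := by
  by_cases hx : x = 0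
  · simp [hx, hnrm.1]
  obtain ⟨hpos, hone⟩ := hnrm.2 x hx
  have hdil_one : aDilNeg a 1 x = x := by ext i; simp [aDilNeg]
  rw [← (strictAntiOn_euclNorm_aDilNeg ha hx).lt_iff_gt (Set.mem_Ioi.mpr one_pos) hpos]
  simp only [hone, hdil_one]
  rw [euclNorm, Real.sqrt_lt' one_pos, one_pow]

end AnisotropicNorm

section UnitBall

variable {d : ℕ}

def sqBall (d : ℕ) : Set (Fin d → ℝ) := {x | ∑ i, x i ^ 2 < 1}

lemma abs_lt_one_of_mem_sqBall {x : Fin d → ℝ} (hx : x ∈ sqBall d) (i : Fin d) :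
    |x i| < 1 := by
  have hi : x i ^ 2 < 1 :=
    (Finset.single_le_sum (fun j _ => sq_nonneg (x j)) (Finset.mem_univ i)).trans_lt hx
  exact (sq_lt_one_iff_abs_lt_one _).mp hi

lemma isOpen_sqBall : IsOpen (sqBall d) :=
  isOpen_lt (by fun_prop) continuous_const

lemma volume_sqBall_pos : 0 < volume (sqBall d) :=
  isOpen_sqBall.measure_pos volume ⟨0, by simp [sqBall]⟩

lemma volume_sqBall_ne_top : volume (sqBall d) ≠ ⊤ := by
  refine ne_top_of_le_ne_top (measure_closedBall_lt_top (x := (0 : Fin d → ℝ)) (r := 1)).ne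
    (measure_mono fun x hx => ?_)
  rw [mem_closedBall_zero_iff, pi_norm_le_iff_of_nonneg zero_le_one]
  exact fun i => (abs_lt_one_of_mem_sqBall hx i).le

lemma volume_preimage_sqBall {ℓ : Fin d → ℝ} (hℓ : ∀ i, 0 < ℓ i) (c : Fin d → ℝ) :
    volume ((fun y => ℓ * y - c) ⁻¹' sqBall d)
      = ENNReal.ofReal (∏ i, ℓ i)⁻¹ * volume (sqBall d) := by
  have hprod : 0 < ∏ i, ℓ i := Finset.prod_pos fun i _ => hℓ i
  have hdet : LinearMap.det (Matrix.toLin' (Matrix.diagonal ℓ)) = ∏ i, ℓ i := by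
    rw [LinearMap.det_toLin', Matrix.det_diagonal]
  have hpre : (fun y => ℓ * y - c) ⁻¹' sqBall d
      = Matrix.toLin' (Matrix.diagonal ℓ) ⁻¹' ((· + -c) ⁻¹' sqBall d) := by
    ext y
    rw [Set.mem_preimage, Set.mem_preimage, Set.mem_preimage, Matrix.toLin'_apply,
      show (Matrix.diagonal ℓ).mulVec y = ℓ * y from funext (Matrix.mulVec_diagonal ℓ y),
      sub_eq_add_neg]
  rw [hpre, Measure.addHaar_preimage_linearMap _ (by rw [hdet]; exact hprod.ne'),
    measure_preimage_add_right, hdet, abs_of_pos (inv_pos.mpr hprod)]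

lemma disjoint_preimage_sqBall (ℓ : Fin d → ℝ) {c c' : Fin d → ℝ} {i : Fin d}
    (hcc' : 2 ≤ |c i - c' i|) :
    Disjoint ((fun y => ℓ * y - c) ⁻¹' sqBall d)
      ((fun y => ℓ * y - c') ⁻¹' sqBall d) := by
  refine Set.disjoint_left.mpr fun y hy hy' => ?_
  have h := abs_lt_one_of_mem_sqBall hy i
  have h' := abs_lt_one_of_mem_sqBall hy' i
  simp only [Pi.sub_apply, Pi.mul_apply] at h h'
  have : |c i - c' i| < 2 := by
    calc |c i - c' i| = |(ℓ i * y i - c' i) - (ℓ i * y i - c i)| := by ring_nf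
      _ ≤ |ℓ i * y i - c' i| + |ℓ i * y i - c i| := abs_sub _ _
      _ < 2 := by linarith
  linarith

def piCentre (n : Fin d → ℕ) : Fin d → ℝ := fun i => Real.pi * ((n i : ℝ) + 1 / 2)

lemma exists_two_le_abs_piCentre_sub {n m : Fin d → ℕ} (hnm : n ≠ m) :
    ∃ i, 2 ≤ |piCentre n i - piCentre m i| := by
  obtain ⟨i, hi⟩ := Function.ne_iff.mp hnm
  refine ⟨i, ?_⟩
  have hgap : (1 : ℝ) ≤ |(n i : ℝ) - m i| := by
    have hi' : (n i : ℤ) ≠ m i := by exact_mod_cast hi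
    exact_mod_cast Int.one_le_abs (sub_ne_zero.mpr hi')
  have hsub : piCentre n i - piCentre m i = Real.pi * ((n i : ℝ) - m i) := by
    simp only [piCentre]; ring
  rw [hsub, abs_mul, abs_of_pos Real.pi_pos]
  nlinarith [Real.pi_gt_three]

lemma pairwise_disjoint_preimage_sqBall_piCentre (ℓ : Fin d → ℝ) :
    Pairwise (Function.onFun Disjoint
      fun n : Fin d → ℕ => (fun y => ℓ * y - piCentre n) ⁻¹' sqBall d) :=
  fun _ _ hnm =>
    (exists_two_le_abs_piCentre_sub hnm).elim fun _ hi => disjoint_preimage_sqBall ℓ hi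

end UnitBall

section DisjointSums

variable {α ι : Type*}

/-- At each point at most one of the disjoint sets contributes, so the power passes inside. -/
lemma tsum_mul_indicator_rpow {U : ι → Set α} (hU : Pairwise (Function.onFun Disjoint U))
    (C : ι → ℝ≥0∞) {p : ℝ} (hp : 0 < p) (x : α) :
    (∑' n, C n * (U n).indicator 1 x) ^ p = ∑' n, C n ^ p * (U n).indicator 1 x := by
  by_cases hx : ∃ n₀, x ∈ U n₀
  · obtain ⟨n₀, hn₀⟩ := hx
    have hout : ∀ n, n ≠ n₀ → x ∉ U n := fun n hn hxn =>
      Set.disjoint_left.mp (hU hn) hxn hn₀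
    rw [tsum_eq_single n₀ (fun n hn => by simp [Set.indicator_of_notMem (hout n hn)]),
      tsum_eq_single n₀ (fun n hn => by simp [Set.indicator_of_notMem (hout n hn)]),
      Set.indicator_of_mem hn₀, Pi.one_apply, mul_one, mul_one]
  · push Not at hx
    simp [Set.indicator_of_notMem (hx _), ENNReal.zero_rpow_of_pos hp]

lemma lintegral_tsum_mul_indicator_rpow [MeasurableSpace α] [Countable ι] (μ : Measure α)
    {U : ι → Set α} (hU : Pairwise (Function.onFun Disjoint U))
    (hUm : ∀ n, MeasurableSet (U n)) {v : ℝ≥0∞} (hUv : ∀ n, μ (U n) = v)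
    (C : ι → ℝ≥0∞) {p : ℝ} (hp : 0 < p) :
    ∫⁻ x, (∑' n, C n * (U n).indicator 1 x) ^ p ∂μ = v * ∑' n, C n ^ p := by
  simp_rw [tsum_mul_indicator_rpow hU C hp]
  rw [lintegral_tsum fun n => ((measurable_one.indicator (hUm n)).const_mul _).aemeasurable,
    ← ENNReal.tsum_mul_left]
  refine tsum_congr fun n => ?_
  rw [lintegral_const_mul _ (measurable_one.indicator (hUm n)), lintegral_indicator_one (hUm n),
    hUv, mul_comm]

end DisjointSums

section Rectangles

/-- Consecutive knots differ by `lenO` or `lenI`; the three branches of `knot` agree at the two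
junctions `k = mOut` and `k = mOut + mIn`. -/
lemma knot_lt_knot_add_one {a β : ℝ} (haβ : 0 < a * β) {j : ℕ} (hj : 0 < j) (k : ℤ) :
    knot a β j k < knot a β j (k + 1) := by
  have hj0 : (0 : ℝ) < j := by exact_mod_cast hj
  have hB : 0 < (j : ℝ) ^ (a * β) := Real.rpow_pos_of_pos hj0 _
  have hAB : (j : ℝ) ^ (a * β) < ((j : ℝ) + 1) ^ (a * β) :=
    Real.rpow_lt_rpow hj0.le (lt_add_one _) haβ
  have hmO : 0 < mOut a j := Int.ceil_pos.mpr (Real.rpow_pos_of_pos hj0 _)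
  have hmI : 0 < mIn a j := Int.ceil_pos.mpr (Real.rpow_pos_of_pos hj0 _)
  have hlO : 0 < lenO a β j := div_pos (by linarith) (by exact_mod_cast hmO)
  have hlI : 0 < lenI a β j := div_pos (by linarith) (by exact_mod_cast hmI)
  have hOut :
      (mOut a j : ℝ) * lenO a β j = ((j : ℝ) + 1) ^ (a * β) - (j : ℝ) ^ (a * β) := by
    rw [lenO]; field_simp
  have hIn : (mIn a j : ℝ) * lenI a β j = 2 * (j : ℝ) ^ (a * β) := by
    rw [lenI]; field_simp
  simp only [knot]
  split_ifs <;> push_cast <;> first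
    | omega
    | linarith
    | (obtain rfl : k = mOut a j; omega; linarith)
    | (obtain rfl : k = mOut a j + mIn a j; omega; push_cast; linarith)

/-- The diagonal of `δ_R`. -/
def sides {d : ℕ} (R : Fin d → Set ℝ) : Fin d → ℝ := fun i => (volume (R i)).toReal

lemma sides_pos_of_mem_rectKall {d : ℕ} {a : Fin d → ℝ} (ha : ∀ i, 0 < a i) {β : ℝ}
    (hβ : 0 < β) {R : Fin d → Set ℝ} (hR : R ∈ rectKall a β) (i : Fin d) :
    0 < sides R i := by
  obtain ⟨u, v, huv, hRi⟩ : ∃ u v : ℝ, u < v ∧ R i = Set.Ico u v := by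
    rcases hR with hR | hR
    · exact ⟨-1, 1, by norm_num, by rw [Set.mem_singleton_iff.mp hR]⟩
    · obtain ⟨j, hj, hRj, -⟩ := Set.mem_iUnion₂.mp hR
      obtain ⟨k, -, -, hk⟩ := hRj i
      exact ⟨_, _, knot_lt_knot_add_one (mul_pos (ha i) hβ) hj k, hk⟩
  rw [sides, hRi, Real.volume_Ico, ENNReal.toReal_ofReal (sub_nonneg.mpr huv.le)]
  exact sub_pos.mpr huv

end Rectangles

lemma tsum_ofReal_mul_rpow {ι : Type*} {t : ℝ} (ht : 0 ≤ t) {b : ι → ℝ}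
    (hb : ∀ n, 0 ≤ b n) {p : ℝ} (hp : 0 ≤ p) :
    ∑' n, ENNReal.ofReal (t * b n) ^ p
      = ENNReal.ofReal (t ^ p) * ∑' n, ENNReal.ofReal (b n ^ p) := by
  rw [← ENNReal.tsum_mul_left]
  refine tsum_congr fun n => ?_
  rw [ENNReal.ofReal_rpow_of_nonneg (mul_nonneg ht (hb n)) hp, Real.mul_rpow ht (hb n),
    ENNReal.ofReal_mul (Real.rpow_nonneg ht p)]

lemma rpow_mixed_term_eq {ι : Type*} {r : ℝ} (hr : 0 < r) (σ : ℝ) {b : ι → ℝ}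
    (hb : ∀ n, 0 ≤ b n) {p q : ℝ} (hp : 0 < p) (hq : 0 < q) (V : ℝ≥0∞) :
    ((ENNReal.ofReal r⁻¹ * V * ∑' n, ENNReal.ofReal (r ^ σ * b n) ^ p) ^ (1 / p)) ^ q
      = V ^ (q / p) * (ENNReal.ofReal (r ^ ((σ - 1 / p) * q)) *
          (∑' n, ENNReal.ofReal (b n ^ p)) ^ (q / p)) := by
  have hqp : 0 ≤ q / p := (div_pos hq hp).le
  have hexp : r⁻¹ ^ (q / p) * ((r ^ σ) ^ p) ^ (q / p) = r ^ ((σ - 1 / p) * q) := by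
    rw [← Real.rpow_neg_one, ← Real.rpow_mul hr.le, ← Real.rpow_mul hr.le,
      ← Real.rpow_mul hr.le, ← Real.rpow_add hr]
    congr 1
    field_simp
    ring
  rw [tsum_ofReal_mul_rpow (Real.rpow_nonneg hr.le σ) hb hp.le, ← ENNReal.rpow_mul,
    one_div_mul_eq_div, ENNReal.mul_rpow_of_nonneg _ _ hqp, ENNReal.mul_rpow_of_nonneg _ _ hqp,
    ENNReal.mul_rpow_of_nonneg _ _ hqp, ENNReal.ofReal_rpow_of_nonneg (by positivity) hqp,
    ENNReal.ofReal_rpow_of_nonneg (by positivity) hqp, ← hexp,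
    ENNReal.ofReal_mul (by positivity)]
  ring

section SequenceSpace

variable {d : ℕ} {a : Fin d → ℝ} {nrm : (Fin d → ℝ) → ℝ}

lemma Uset_eq_preimage_sqBall (hnrm : IsAnisoNorm a nrm) (ha : ∀ i, 0 < a i)
    (R : Fin d → Set ℝ) (n : Fin d → ℕ) :
    Uset nrm R n = (fun y => sides R * y - piCentre n) ⁻¹' sqBall d := by
  ext y
  exact hnrm.lt_one_iff ha _

lemma lintegral_tsum_mul_indicator_Uset_rpow (hnrm : IsAnisoNorm a nrm) (ha : ∀ i, 0 < a i)
    {R : Fin d → Set ℝ} (hR : ∀ i, 0 < sides R i) (C : (Fin d → ℕ) → ℝ≥0∞)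
    {p : ℝ} (hp : 0 < p) :
    ∫⁻ x, (∑' n, C n * (Uset nrm R n).indicator (fun _ => 1) x) ^ p
      = ENNReal.ofReal (rVol R)⁻¹ * volume (sqBall d) * ∑' n, C n ^ p := by
  simp only [Uset_eq_preimage_sqBall hnrm ha]
  exact lintegral_tsum_mul_indicator_rpow volume (pairwise_disjoint_preimage_sqBall_piCentre _)
    (fun _ => isOpen_sqBall.measurableSet.preimage (by fun_prop))
    (fun n => volume_preimage_sqBall hR _) C hp

lemma mixedLpQty_eq (hnrm : IsAnisoNorm a nrm) (ha : ∀ i, 0 < a i) {β : ℝ} (hβ : 0 < β)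
    (s : ℝ) {p q : ℝ} (hp : 0 < p) (hq : 0 < q)
    (coef : (Fin d → Set ℝ) → (Fin d → ℕ) → ℂ) :
    mixedLpQty nrm a β s p q coef
      = volume (sqBall d) ^ (1 / p) * discreteQty a β s p q coef := by
  have hV : volume (sqBall d) ^ (1 / p) = (volume (sqBall d) ^ (q / p)) ^ (1 / q) := by
    rw [← ENNReal.rpow_mul]
    congr 1
    field_simp
  rw [mixedLpQty, discreteQty, hV, ← ENNReal.mul_rpow_of_nonneg _ _ (by positivity),
    ← ENNReal.tsum_mul_left]
  congr 1
  refine tsum_congr fun R => ?_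
  have hR := sides_pos_of_mem_rectKall ha hβ R.2
  rw [lintegral_tsum_mul_indicator_Uset_rpow hnrm ha hR _ hp]
  exact rpow_mixed_term_eq (Finset.prod_pos fun i _ => hR i) _ (fun _ => norm_nonneg _) hp hq _

end SequenceSpace

theorem stmt19_general (d : ℕ) (a : Fin d → ℝ) (ha : ∀ i, 1 ≤ a i)
    (nrm : (Fin d → ℝ) → ℝ) (hnrm : IsAnisoNorm a nrm)
    (β : ℝ) (hβ : 1 ≤ β) (s p q : ℝ) (hp : 0 < p) (hq : 0 < q) :
    ∃ c C : ℝ, 0 < c ∧ c ≤ C ∧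
      ∀ coef : (Fin d → Set ℝ) → (Fin d → ℕ) → ℂ,
        ENNReal.ofReal c * discreteQty a β s p q coef ≤
            mixedLpQty nrm a β s p q coef ∧
          mixedLpQty nrm a β s p q coef ≤
            ENNReal.ofReal C * discreteQty a β s p q coef := by
  set V := volume (sqBall d)
  have hV : 0 < V.toReal := ENNReal.toReal_pos volume_sqBall_pos.ne' volume_sqBall_ne_top
  have hc : ENNReal.ofReal (V.toReal ^ (1 / p)) = V ^ (1 / p) := by
    rw [← ENNReal.ofReal_rpow_of_nonneg hV.le (by positivity),
      ENNReal.ofReal_toReal volume_sqBall_ne_top]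
  refine ⟨V.toReal ^ (1 / p), V.toReal ^ (1 / p), by positivity, le_rfl, fun coef => ?_⟩
  rw [hc, mixedLpQty_eq hnrm (fun i => by linarith [ha i]) (by linarith) s hp hq coef]
  exact ⟨le_rfl, le_rfl⟩

/-- Eq. (eq:malt): the two-sided discrete characterization
`‖(s_{R,n})‖_{m^{s,α}_{p,q}(a)} ≍ ( ∑_{R∈𝒦} |R|^{(s/ν+1/2−1/p)q} (∑_n |s_{R,n}|^p)^{q/p} )^{1/q}`,
uniformly over all families of complex coefficients (both sides simultaneously finite or
infinite, here expressed in `ℝ≥0∞`). -/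
theorem stmt19 (d : ℕ) (hd : 1 ≤ d) (a : Fin d → ℝ) (ha : ∀ i, 1 ≤ a i)
    (nrm : (Fin d → ℝ) → ℝ) (hnrm : IsAnisoNorm a nrm)
    (β : ℝ) (hβ : 1 ≤ β) (s p q : ℝ) (hp : 0 < p) (hq : 0 < q) :
    ∃ c C : ℝ, 0 < c ∧ c ≤ C ∧
      ∀ coef : (Fin d → Set ℝ) → (Fin d → ℕ) → ℂ,
        ENNReal.ofReal c * discreteQty a β s p q coef ≤
            mixedLpQty nrm a β s p q coef ∧
          mixedLpQty nrm a β s p q coef ≤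
            ENNReal.ofReal C * discreteQty a β s p q coef :=
  stmt19_general d a ha nrm hnrm β hβ s p q hp hq
end
end
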